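/- Let T be a quasi *-paranormal bounded operator on a complex Hilbert space H and let M be a closed subspace of H invariant under T. Then the restriction of T to M is also quasi *-paranormal (as an operator on M). -/

import Mathlib

/-!
If `S` is the restriction of `T` to a closed invariant subspace `K`, then `S = P T ι` where `ι` is
the inclusion of `K` and `P = ι†` the orthogonal projection onto `K`. Hence `S† = P T† ι`, so
`‖S† S x‖ ≤ ‖T† T x‖`, while `S x` and `S³ x` are just `T x` and `T³ x`: the defining inequality
of quasi *-paranormality passes from `T` to `S`.
-/

section

variable {𝕜 E : Type*} [RCLike 𝕜] [NormedAddCommGroup E] [InnerProductSpace 𝕜 E]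

def IsQuasiStarParanormal [CompleteSpace E] (T : E →L[𝕜] E) : Prop :=
  ∀ x : E, ‖ContinuousLinearMap.adjoint T (T x)‖ ^ 2 ≤ ‖(T ^ 3) x‖ * ‖T x‖

namespace ContinuousLinearMap

variable {K : Submodule 𝕜 E} {T : E →L[𝕜] E} {S : K →L[𝕜] K}

theorem coe_pow_apply_of_restrict (hS : ∀ y, (S y : E) = T y) (n : ℕ) (y : K) :
    ((S ^ n) y : E) = (T ^ n) y := by
  induction n with
  | zero => rfl
  | succ n ih => rw [pow_succ', mul_apply_eq_comp, hS, ih, pow_succ', mul_apply_eq_comp]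

variable [CompleteSpace E] [CompleteSpace K]

theorem eq_adjoint_subtypeL_comp_comp_subtypeL (hS : ∀ y, (S y : E) = T y) :
    S = adjoint K.subtypeL ∘L T ∘L K.subtypeL := by
  ext y
  rw [K.adjoint_subtypeL, comp_apply, comp_apply, K.subtypeL_apply, ← hS,
    K.orthogonalProjectionOnto_mem_subspace_eq_self]

theorem adjoint_eq_orthogonalProjectionOnto_comp (hS : ∀ y, (S y : E) = T y) :
    adjoint S = K.orthogonalProjectionOnto ∘L adjoint T ∘L K.subtypeL := by
  rw [eq_adjoint_subtypeL_comp_comp_subtypeL hS, adjoint_comp, adjoint_comp, adjoint_adjoint,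
    K.adjoint_subtypeL, comp_assoc]

theorem norm_adjoint_apply_le_of_restrict (hS : ∀ y, (S y : E) = T y) (y : K) :
    ‖adjoint S y‖ ≤ ‖adjoint T y‖ := by
  rw [adjoint_eq_orthogonalProjectionOnto_comp hS]
  exact K.norm_orthogonalProjectionOnto_apply_le _

end ContinuousLinearMap

open ContinuousLinearMap in
theorem IsQuasiStarParanormal.of_restrict [CompleteSpace E] {K : Submodule 𝕜 E} [CompleteSpace K]
    {T : E →L[𝕜] E} (hT : IsQuasiStarParanormal T) {S : K →L[𝕜] K}
    (hS : ∀ y, (S y : E) = T y) : IsQuasiStarParanormal S := by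
  intro x
  have hSx : ‖S x‖ = ‖T x‖ := by rw [← hS]; rfl
  have hS3x : ‖(S ^ 3) x‖ = ‖(T ^ 3) x‖ := by
    rw [← coe_pow_apply_of_restrict hS]; rfl
  calc ‖adjoint S (S x)‖ ^ 2 ≤ ‖adjoint T (T x)‖ ^ 2 := by
        gcongr
        rw [← hS]
        exact norm_adjoint_apply_le_of_restrict hS _
    _ ≤ ‖(S ^ 3) x‖ * ‖S x‖ := by rw [hS3x, hSx]; exact hT x

end

theorem quasi_star_paranormal_restrict
    {H : Type*} [NormedAddCommGroup H] [InnerProductSpace ℂ H] [CompleteSpace H]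
    (T : H →L[ℂ] H)
    (hqsp : ∀ x : H, ‖(ContinuousLinearMap.adjoint T) (T x)‖ ^ 2 ≤ ‖(T ^ 3) x‖ * ‖T x‖)
    (M : Submodule ℂ H) (hMc : IsClosed (M : Set H))
    (hinv : ∀ x ∈ M, T x ∈ M) :
    haveI : CompleteSpace M := hMc.completeSpace_coe
    ∀ x : M,
      ‖(ContinuousLinearMap.adjoint
          (((T.comp M.subtypeL).codRestrict M (fun y => hinv y y.2))))
          ((((T.comp M.subtypeL).codRestrict M (fun y => hinv y y.2))) x)‖ ^ 2 ≤
        ‖((((T.comp M.subtypeL).codRestrict M (fun y => hinv y y.2))) ^ 3) x‖ *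
          ‖(((T.comp M.subtypeL).codRestrict M (fun y => hinv y y.2))) x‖ :=
  have : CompleteSpace M := hMc.completeSpace_coe
  IsQuasiStarParanormal.of_restrict (T := T) hqsp fun _ => rfl
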